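/- Let κ > 0, set α(t) = ∫₀^{κ√t} e^{-r²/2} dr and η(t) = ∫₀^∞ e^{-r²/(2t)} r sinh(κr) log(sinh(κr)/(κr)) dr for t > 0. Then for every t > 0: η(t) < κ²t² + κ t^{3/2}(κ²t + 1) e^{κ²t/2} α(t) - √(π/2)·κ t^{3/2} e^{κ²t/2}·log(1 + √(π/2)·κ²t·α(t)^{-1}). -/

import Mathlib

/-!
Write `w(r) = r sinh(κr) e^{-r²/(2t)}`. The pointwise inequality `(1 + x) sinh x < x eˣ` gives
`log (sinh x / x) < x - log (1 + x)`, hence `η(t) < κ ∫ r w - ∫ w log (1 + κr)`.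

Splitting `sinh` into exponentials, everything reduces to the moments
`∫₀^∞ rᵏ e^{ar} e^{-r²/(2t)} dr`: the zeroth one is `α` after completing the square, and the
higher ones follow by integrating by parts against the Gaussian. This evaluates `∫ r w`, `∫ w` and
`∫ w / r`.

Finally `log (1 + κr)` is a convex function of `1 / r`, so Jensen's inequality for the probability
measure `w / ∫ w` gives `∫ w log (1 + κr) ≥ (∫ w) log (1 + κρ)` with
`ρ = ∫ w / ∫ (w / r) = √(π/2) κ t / α(t)`.
-/

open Real MeasureTheory

/-- `α(t) = ∫₀^{κ√t} e^{-r²/2} dr`. -/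
noncomputable def alphaFun (κ t : ℝ) : ℝ :=
  ∫ r in (0 : ℝ)..(κ * Real.sqrt t), Real.exp (-r ^ 2 / 2)

/-- `η(t) = ∫₀^∞ e^{-r²/(2t)} r sinh(κr) log(sinh(κr)/(κr)) dr`. -/
noncomputable def etaFun (κ t : ℝ) : ℝ :=
  ∫ r in Set.Ioi (0 : ℝ),
    Real.exp (-r ^ 2 / (2 * t)) * r * Real.sinh (κ * r) *
      Real.log (Real.sinh (κ * r) / (κ * r))

open Filter Set Topology
open scoped Nat

lemma one_add_mul_sinh_lt {x : ℝ} (hx : 0 < x) : (1 + x) * sinh x < x * exp x := by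
  -- `h y = (1 + y) e^{-y} - (1 - y) e^y` vanishes at `0` and has derivative `2 y sinh y`
  set h : ℝ → ℝ := fun y ↦ (1 + y) * exp (-y) - (1 - y) * exp y
  have hderiv : ∀ y, HasDerivAt h (2 * y * sinh y) y := by
    intro y
    refine ((((hasDerivAt_id y).const_add 1).mul (hasDerivAt_neg y).exp).sub
      (((hasDerivAt_id y).const_sub 1).mul (hasDerivAt_exp y))).congr_deriv ?_
    simp only [id, sinh_eq]
    ring
  have hmono : StrictMonoOn h (Ici 0) := by
    refine strictMonoOn_of_deriv_pos (convex_Ici 0)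
      (fun y _ ↦ (hderiv y).continuousAt.continuousWithinAt) fun y hy ↦ ?_
    rw [interior_Ici, mem_Ioi] at hy
    rw [(hderiv y).deriv]
    have := sinh_pos_iff.2 hy
    positivity
  have hpos : h 0 < h x := hmono self_mem_Ici hx.le hx
  simp only [h, neg_zero, exp_zero] at hpos
  rw [sinh_eq]
  nlinarith

lemma log_sinh_div_lt {x : ℝ} (hx : 0 < x) : log (sinh x / x) < x - log (1 + x) := by
  have key : sinh x / x * (1 + x) < exp x := by
    rw [div_mul_eq_mul_div, div_lt_iff₀ hx, mul_comm, mul_comm (exp x)]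
    exact one_add_mul_sinh_lt hx
  have hlog := log_lt_log (by have := sinh_pos_iff.2 hx; positivity) key
  rw [log_mul (by have := sinh_pos_iff.2 hx; positivity) (by positivity), log_exp] at hlog
  linarith

lemma abs_log_one_add_le {x : ℝ} (hx : 0 ≤ x) : |log (1 + x)| ≤ x := by
  rw [abs_of_nonneg (log_nonneg (by linarith))]
  linarith [log_le_sub_one_of_pos (by linarith : 0 < 1 + x)]

lemma abs_log_sinh_div_le {x : ℝ} (hx : 0 < x) : |log (sinh x / x)| ≤ x := by
  have hnonneg : 0 ≤ log (sinh x / x) :=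
    log_nonneg ((le_div_iff₀ hx).2 (by simpa using self_le_sinh_iff.2 hx.le))
  rw [abs_of_nonneg hnonneg]
  linarith [log_sinh_div_lt hx, log_nonneg (by linarith : (1 : ℝ) ≤ 1 + x)]

/-- The tangent line at `s = 1/ρ` of the convex function `s ↦ log (1 + κ / s)`, evaluated at
`s = 1 / r`. -/
lemma log_one_add_tangent_le {κ ρ r : ℝ} (hκ : 0 ≤ κ) (hρ : 0 < ρ) (hr : 0 < r) :
    log (1 + κ * ρ) + κ * ρ / (1 + κ * ρ) * (1 - ρ / r) ≤ log (1 + κ * r) := by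
  have hlog := log_le_sub_one_of_pos (x := (1 + κ * ρ) / (1 + κ * r)) (by positivity)
  rw [log_div (by positivity) (by positivity)] at hlog
  have hgap : 1 - (1 + κ * ρ) / (1 + κ * r) - κ * ρ / (1 + κ * ρ) * (1 - ρ / r) =
      κ * (r - ρ) ^ 2 / ((1 + κ * r) * (1 + κ * ρ) * r) := by
    field_simp
    ring
  have : 0 ≤ κ * (r - ρ) ^ 2 / ((1 + κ * r) * (1 + κ * ρ) * r) := by positivity
  linarith

lemma hasDerivAt_gauss (t r : ℝ) :
    HasDerivAt (fun r ↦ exp (-r ^ 2 / (2 * t))) (-(r / t) * exp (-r ^ 2 / (2 * t))) r := by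
  have h : HasDerivAt (fun r : ℝ ↦ -r ^ 2 / (2 * t)) (-(2 * r) / (2 * t)) r := by
    simpa using ((hasDerivAt_pow 2 r).neg).div_const (2 * t)
  convert h.exp using 1
  ring

lemma hasDerivAt_exp_mul (a r : ℝ) : HasDerivAt (fun r ↦ exp (a * r)) (a * exp (a * r)) r := by
  simpa [mul_comm] using ((hasDerivAt_id r).const_mul a).exp

noncomputable def gaussPartial (x : ℝ) : ℝ := ∫ v in (0 : ℝ)..x, exp (-v ^ 2 / 2)

lemma hasDerivAt_gaussPartial (x : ℝ) : HasDerivAt gaussPartial (exp (-x ^ 2 / 2)) x :=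
  ((by fun_prop : Continuous fun v : ℝ ↦ exp (-v ^ 2 / 2)).integral_hasStrictDerivAt 0 x).hasDerivAt

lemma gaussPartial_neg (x : ℝ) : gaussPartial (-x) = -gaussPartial x := by
  simp only [gaussPartial]
  rw [← intervalIntegral.integral_symm, ← neg_zero, ← intervalIntegral.integral_comp_neg]
  simp

lemma tendsto_gaussPartial_atTop : Tendsto gaussPartial atTop (𝓝 √(π / 2)) := by
  have hexp : (fun v : ℝ ↦ exp (-v ^ 2 / 2)) = fun v ↦ exp (-(1 / 2) * v ^ 2) := by
    ext v; ring_nf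
  have hI : ∫ v in Ioi (0 : ℝ), exp (-v ^ 2 / 2) = √(π / 2) := by
    rw [hexp, integral_gaussian_Ioi, show π / (1 / 2) = 2 ^ 2 * (π / 2) by ring,
      sqrt_mul (by positivity), sqrt_sq zero_le_two]
    ring
  rw [← hI]
  refine intervalIntegral_tendsto_integral_Ioi 0 ?_ tendsto_id
  rw [hexp]
  exact (integrable_exp_neg_mul_sq (by norm_num)).integrableOn

lemma alphaFun_neg (κ t : ℝ) : alphaFun (-κ) t = -alphaFun κ t := by
  rw [alphaFun, neg_mul]
  exact gaussPartial_neg _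

lemma alphaFun_pos {κ t : ℝ} (hκ : 0 < κ) (ht : 0 < t) : 0 < alphaFun κ t :=
  intervalIntegral.intervalIntegral_pos_of_pos_on
    ((by fun_prop : Continuous fun v : ℝ ↦ exp (-v ^ 2 / 2)).intervalIntegrable _ _)
    (fun _ _ ↦ exp_pos _) (by positivity)

section GaussMoments

variable {t : ℝ}

lemma pow_mul_exp_mul_gauss_le (ht : 0 < t) (k : ℕ) (a : ℝ) {r : ℝ} (hr : 0 ≤ r) :
    r ^ k * exp (a * r) * exp (-r ^ 2 / (2 * t)) ≤
      k ! * exp ((a + 1) ^ 2 * t) * exp (-(1 / (4 * t)) * r ^ 2) := by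
  have hpow : r ^ k ≤ k ! * exp r := by
    have := pow_div_factorial_le_exp r hr k
    rwa [div_le_iff₀ (by positivity), mul_comm] at this
  -- `(a + 1) r ≤ (a + 1)² t + r² / (4t)` absorbs the linear exponent into the Gaussian
  have hexp : r + a * r + -r ^ 2 / (2 * t) ≤ (a + 1) ^ 2 * t + -(1 / (4 * t)) * r ^ 2 := by
    have : 0 ≤ (2 * (a + 1) * t - r) ^ 2 / (4 * t) := by positivity
    have e : (2 * (a + 1) * t - r) ^ 2 / (4 * t) =
        (a + 1) ^ 2 * t + -(1 / (4 * t)) * r ^ 2 - (r + a * r + -r ^ 2 / (2 * t)) := by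
      field_simp; ring
    linarith
  calc r ^ k * exp (a * r) * exp (-r ^ 2 / (2 * t))
      ≤ k ! * exp r * exp (a * r) * exp (-r ^ 2 / (2 * t)) := by gcongr
    _ = k ! * exp (r + a * r + -r ^ 2 / (2 * t)) := by rw [exp_add, exp_add]; ring
    _ ≤ k ! * exp ((a + 1) ^ 2 * t + -(1 / (4 * t)) * r ^ 2) := by gcongr
    _ = k ! * exp ((a + 1) ^ 2 * t) * exp (-(1 / (4 * t)) * r ^ 2) := by rw [exp_add]; ring

lemma integrableOn_pow_mul_exp_mul_gauss (ht : 0 < t) (k : ℕ) (a : ℝ) :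
    IntegrableOn (fun r ↦ r ^ k * exp (a * r) * exp (-r ^ 2 / (2 * t))) (Ioi 0) := by
  refine Integrable.mono' ((integrable_exp_neg_mul_sq (b := 1 / (4 * t)) (by positivity)).const_mul
    (k ! * exp ((a + 1) ^ 2 * t))).integrableOn (by fun_prop) ?_
  refine (ae_restrict_iff' measurableSet_Ioi).2 (Eventually.of_forall fun r (hr : 0 < r) ↦ ?_)
  rw [norm_of_nonneg (by positivity)]
  exact pow_mul_exp_mul_gauss_le ht k a hr.le

lemma tendsto_pow_mul_exp_mul_gauss (ht : 0 < t) (k : ℕ) (a : ℝ) :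
    Tendsto (fun r ↦ r ^ k * exp (a * r) * exp (-r ^ 2 / (2 * t))) atTop (𝓝 0) := by
  have hgauss : Tendsto (fun r : ℝ ↦ exp (-(1 / (4 * t)) * r ^ 2)) atTop (𝓝 0) :=
    tendsto_exp_atBot.comp <| (tendsto_pow_atTop two_ne_zero).const_mul_atTop_of_neg
      (by simp [ht])
  have hbound := hgauss.const_mul (k ! * exp ((a + 1) ^ 2 * t))
  rw [mul_zero] at hbound
  refine tendsto_of_tendsto_of_tendsto_of_le_of_le' tendsto_const_nhds hbound ?_ ?_
  · filter_upwards [eventually_ge_atTop 0] with r hr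
    positivity
  · filter_upwards [eventually_ge_atTop 0] with r hr
    exact pow_mul_exp_mul_gauss_le ht k a hr

lemma integral_mul_mul_gauss_of_hasDerivAt (ht : 0 < t) {f f' : ℝ → ℝ}
    (hf : ∀ r, HasDerivAt f (f' r) r)
    (hrf : IntegrableOn (fun r ↦ r * f r * exp (-r ^ 2 / (2 * t))) (Ioi 0))
    (hf' : IntegrableOn (fun r ↦ f' r * exp (-r ^ 2 / (2 * t))) (Ioi 0))
    (hlim : Tendsto (fun r ↦ f r * exp (-r ^ 2 / (2 * t))) atTop (𝓝 0)) :
    ∫ r in Ioi 0, r * f r * exp (-r ^ 2 / (2 * t)) =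
      t * f 0 + t * ∫ r in Ioi 0, f' r * exp (-r ^ 2 / (2 * t)) := by
  have hG : ∀ r ∈ Ici (0 : ℝ), HasDerivAt (fun r ↦ -t * (f r * exp (-r ^ 2 / (2 * t))))
      (r * f r * exp (-r ^ 2 / (2 * t)) - t * (f' r * exp (-r ^ 2 / (2 * t)))) r := by
    intro r _
    refine (((hf r).fun_mul (hasDerivAt_gauss t r)).const_mul (-t)).congr_deriv ?_
    field_simp
    ring
  have hFTC := integral_Ioi_of_hasDerivAt_of_tendsto' hG (hrf.sub (hf'.const_mul t))
    (by simpa using hlim.const_mul (-t))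
  rw [integral_sub hrf (hf'.const_mul t), integral_const_mul] at hFTC
  simp only [ne_eq, OfNat.ofNat_ne_zero, not_false_eq_true, zero_pow, neg_zero, zero_div,
    exp_zero, mul_one] at hFTC
  linarith

noncomputable def gaussMoment (t : ℝ) (k : ℕ) (a : ℝ) : ℝ :=
  ∫ r in Ioi 0, r ^ k * exp (a * r) * exp (-r ^ 2 / (2 * t))

lemma gaussMoment_zero (ht : 0 < t) (a : ℝ) :
    gaussMoment t 0 a = √t * exp (a ^ 2 * t / 2) * (√(π / 2) + alphaFun a t) := by
  have hst : 0 < √t := sqrt_pos.2 ht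
  have hts : √t ^ 2 = t := sq_sqrt ht.le
  -- complete the square: `a r - r² / (2t) = a² t / 2 - (r - a t)² / (2t)`
  set G : ℝ → ℝ := fun r ↦ √t * exp (a ^ 2 * t / 2) * gaussPartial ((r - a * t) / √t)
  have hG : ∀ r ∈ Ici (0 : ℝ), HasDerivAt G (r ^ 0 * exp (a * r) * exp (-r ^ 2 / (2 * t))) r := by
    intro r _
    have hlin : HasDerivAt (fun r ↦ (r - a * t) / √t) (1 / √t) r :=
      ((hasDerivAt_id r).sub_const (a * t)).div_const √t
    refine (((hasDerivAt_gaussPartial _).comp r hlin).const_mul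
      (√t * exp (a ^ 2 * t / 2))).congr_deriv ?_
    have hshift : -((r - a * t) / √t) ^ 2 / 2 = -(r - a * t) ^ 2 / (2 * t) := by
      rw [div_pow, hts]; ring
    rw [pow_zero, one_mul, ← exp_add, hshift]
    calc √t * exp (a ^ 2 * t / 2) * (exp (-(r - a * t) ^ 2 / (2 * t)) * (1 / √t))
        = exp (a ^ 2 * t / 2 + -(r - a * t) ^ 2 / (2 * t)) := by
          rw [exp_add]; field_simp
      _ = exp (a * r + -r ^ 2 / (2 * t)) := by congr 1; field_simp; ring
  have hlim : Tendsto G atTop (𝓝 (√t * exp (a ^ 2 * t / 2) * √(π / 2))) :=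
    (tendsto_gaussPartial_atTop.comp ((tendsto_atTop_add_const_right _ (-(a * t))
      tendsto_id).atTop_div_const hst)).const_mul _
  have h0 : (0 - a * t) / √t = -(a * √t) := by
    rw [div_eq_iff hst.ne']
    linear_combination a * hts
  rw [gaussMoment, integral_Ioi_of_hasDerivAt_of_tendsto' hG
    (integrableOn_pow_mul_exp_mul_gauss ht 0 a) hlim]
  simp only [G, h0, gaussPartial_neg]
  rw [alphaFun, ← gaussPartial]
  ring

lemma gaussMoment_one (ht : 0 < t) (a : ℝ) :
    gaussMoment t 1 a = t + a * t * gaussMoment t 0 a := by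
  have h0 := integrableOn_pow_mul_exp_mul_gauss ht 0 a
  simp only [pow_zero, one_mul] at h0
  have h := integral_mul_mul_gauss_of_hasDerivAt ht (hasDerivAt_exp_mul a)
    (by simpa using integrableOn_pow_mul_exp_mul_gauss ht 1 a)
    (by simp only [mul_assoc]; exact h0.const_mul a)
    (by simpa using tendsto_pow_mul_exp_mul_gauss ht 0 a)
  simp only [mul_assoc, integral_const_mul, mul_zero, exp_zero, mul_one] at h
  simp only [gaussMoment, pow_one, pow_zero, one_mul, mul_assoc] at h ⊢
  rw [h]
  ring

lemma gaussMoment_add_two (ht : 0 < t) (k : ℕ) (a : ℝ) :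
    gaussMoment t (k + 2) a = t * ((k + 1) * gaussMoment t k a + a * gaussMoment t (k + 1) a) := by
  have hf : ∀ r, HasDerivAt (fun r ↦ r ^ (k + 1) * exp (a * r))
      ((k + 1) * r ^ k * exp (a * r) + r ^ (k + 1) * (a * exp (a * r))) r := by
    intro r
    refine ((hasDerivAt_pow (k + 1) r).fun_mul (hasDerivAt_exp_mul a r)).congr_deriv ?_
    push_cast
    ring
  have hk := integrableOn_pow_mul_exp_mul_gauss ht k a
  have hk1 := integrableOn_pow_mul_exp_mul_gauss ht (k + 1) a
  have h := integral_mul_mul_gauss_of_hasDerivAt ht hf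
    (by simpa [pow_succ, mul_assoc, mul_comm, mul_left_comm] using
      integrableOn_pow_mul_exp_mul_gauss ht (k + 2) a)
    (by
      refine IntegrableOn.congr_fun ((hk.const_mul (k + 1)).add (hk1.const_mul a))
        (fun r _ ↦ ?_) measurableSet_Ioi
      simp only [Pi.add_apply]
      ring)
    (by simpa using tendsto_pow_mul_exp_mul_gauss ht (k + 1) a)
  simp only [ne_eq, Nat.add_one_ne_zero, not_false_eq_true, zero_pow, zero_mul,
    mul_zero, zero_add] at h
  simp only [gaussMoment]
  rw [← integral_const_mul, ← integral_const_mul, ← integral_add (hk.const_mul _)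
    (hk1.const_mul _)]
  convert h using 2
  · ext r; ring
  · congr 1; ext r; ring

end GaussMoments

section SinhGauss

variable {t : ℝ}

lemma pow_mul_sinh_mul_gauss_eq (k : ℕ) (κ : ℝ) :
    (fun r ↦ r ^ k * (sinh (κ * r) * exp (-r ^ 2 / (2 * t)))) = fun r ↦
      (r ^ k * exp (κ * r) * exp (-r ^ 2 / (2 * t)) -
        r ^ k * exp (-κ * r) * exp (-r ^ 2 / (2 * t))) / 2 := by
  ext r
  rw [sinh_eq, neg_mul]
  ring

lemma integrableOn_pow_mul_sinh_mul_gauss (ht : 0 < t) (k : ℕ) (κ : ℝ) :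
    IntegrableOn (fun r ↦ r ^ k * (sinh (κ * r) * exp (-r ^ 2 / (2 * t)))) (Ioi 0) := by
  rw [pow_mul_sinh_mul_gauss_eq]
  exact ((integrableOn_pow_mul_exp_mul_gauss ht k κ).sub
    (integrableOn_pow_mul_exp_mul_gauss ht k (-κ))).div_const 2

lemma integral_pow_mul_sinh_mul_gauss (ht : 0 < t) (k : ℕ) (κ : ℝ) :
    ∫ r in Ioi 0, r ^ k * (sinh (κ * r) * exp (-r ^ 2 / (2 * t))) =
      (gaussMoment t k κ - gaussMoment t k (-κ)) / 2 := by
  rw [pow_mul_sinh_mul_gauss_eq, integral_div, integral_sub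
    (integrableOn_pow_mul_exp_mul_gauss ht k κ) (integrableOn_pow_mul_exp_mul_gauss ht k (-κ))]
  rfl

lemma integral_sinh_mul_gauss (ht : 0 < t) (κ : ℝ) :
    ∫ r in Ioi 0, sinh (κ * r) * exp (-r ^ 2 / (2 * t)) =
      √t * exp (κ ^ 2 * t / 2) * alphaFun κ t := by
  have h := integral_pow_mul_sinh_mul_gauss ht 0 κ
  simp only [pow_zero, one_mul] at h
  rw [h, gaussMoment_zero ht, gaussMoment_zero ht, neg_sq, alphaFun_neg]
  ring

lemma integral_mul_sinh_mul_gauss (ht : 0 < t) (κ : ℝ) :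
    ∫ r in Ioi 0, r * (sinh (κ * r) * exp (-r ^ 2 / (2 * t))) =
      √(π / 2) * κ * t * √t * exp (κ ^ 2 * t / 2) := by
  have h := integral_pow_mul_sinh_mul_gauss ht 1 κ
  simp only [pow_one] at h
  rw [h, gaussMoment_one ht, gaussMoment_one ht, gaussMoment_zero ht, gaussMoment_zero ht,
    neg_sq, alphaFun_neg]
  ring

lemma integral_sq_mul_sinh_mul_gauss (ht : 0 < t) (κ : ℝ) :
    ∫ r in Ioi 0, r ^ 2 * (sinh (κ * r) * exp (-r ^ 2 / (2 * t))) =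
      κ * t ^ 2 + (t + κ ^ 2 * t ^ 2) * √t * exp (κ ^ 2 * t / 2) * alphaFun κ t := by
  have h2 := gaussMoment_add_two ht 0
  simp only [zero_add, Nat.cast_zero] at h2
  rw [integral_pow_mul_sinh_mul_gauss ht, h2, h2, gaussMoment_one ht, gaussMoment_one ht,
    gaussMoment_zero ht, gaussMoment_zero ht, neg_sq, alphaFun_neg]
  ring

lemma integrableOn_mul_sinh_mul_gauss_mul {κ C : ℝ} (ht : 0 < t) (hκ : 0 ≤ κ) {h : ℝ → ℝ}
    (hm : AEStronglyMeasurable h (volume.restrict (Ioi 0)))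
    (hb : ∀ r ∈ Ioi (0 : ℝ), |h r| ≤ C * r) :
    IntegrableOn (fun r ↦ r * (sinh (κ * r) * exp (-r ^ 2 / (2 * t))) * h r) (Ioi 0) := by
  refine Integrable.mono' ((integrableOn_pow_mul_sinh_mul_gauss ht 2 κ).const_mul C)
    ((by fun_prop : Continuous _).aestronglyMeasurable.mul hm) ?_
  refine (ae_restrict_iff' measurableSet_Ioi).2 (Eventually.of_forall fun r hr ↦ ?_)
  have hr' : 0 < r := hr
  have hw : 0 ≤ r * (sinh (κ * r) * exp (-r ^ 2 / (2 * t))) := by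
    have := sinh_nonneg_iff.2 (mul_nonneg hκ hr'.le)
    positivity
  rw [norm_mul, norm_of_nonneg hw, norm_eq_abs]
  calc r * (sinh (κ * r) * exp (-r ^ 2 / (2 * t))) * |h r|
      ≤ r * (sinh (κ * r) * exp (-r ^ 2 / (2 * t))) * (C * r) := by gcongr; exact hb r hr
    _ = C * (r ^ 2 * (sinh (κ * r) * exp (-r ^ 2 / (2 * t)))) := by ring

lemma integrableOn_mul_sinh_mul_gauss_mul_log_one_add {κ : ℝ} (ht : 0 < t) (hκ : 0 ≤ κ) :
    IntegrableOn (fun r ↦ r * (sinh (κ * r) * exp (-r ^ 2 / (2 * t))) * log (1 + κ * r))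
      (Ioi 0) :=
  integrableOn_mul_sinh_mul_gauss_mul ht hκ
    (by fun_prop : Measurable fun r ↦ log (1 + κ * r)).aestronglyMeasurable
    fun r (hr : 0 < r) ↦ abs_log_one_add_le (by positivity)

end SinhGauss

/-- Jensen's inequality for `s ↦ log (1 + κ / s)` and the probability measure proportional to
`r u(r) dr`, under which `1 / r` has mean `1 / ρ`. -/
lemma integral_mul_log_one_add_ge {u : ℝ → ℝ} {κ ρ : ℝ} (hκ : 0 ≤ κ) (hρ : 0 < ρ)
    (hu : ∀ r ∈ Ioi (0 : ℝ), 0 ≤ u r) (hu_int : IntegrableOn u (Ioi 0))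
    (hru_int : IntegrableOn (fun r ↦ r * u r) (Ioi 0))
    (hlog_int : IntegrableOn (fun r ↦ r * u r * log (1 + κ * r)) (Ioi 0))
    (hρ_eq : ρ * ∫ r in Ioi 0, u r = ∫ r in Ioi 0, r * u r) :
    (∫ r in Ioi 0, r * u r) * log (1 + κ * ρ) ≤ ∫ r in Ioi 0, r * u r * log (1 + κ * r) := by
  set c := κ * ρ / (1 + κ * ρ)
  have htangent_int := (hru_int.const_mul (log (1 + κ * ρ) + c)).sub (hu_int.const_mul (c * ρ))
  calc (∫ r in Ioi 0, r * u r) * log (1 + κ * ρ)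
      = ∫ r in Ioi 0, ((log (1 + κ * ρ) + c) * (r * u r) - c * ρ * u r) := by
        rw [integral_sub (hru_int.const_mul _) (hu_int.const_mul _), integral_const_mul,
          integral_const_mul, mul_assoc, hρ_eq]
        ring
    _ ≤ ∫ r in Ioi 0, r * u r * log (1 + κ * r) := by
        refine setIntegral_mono_on htangent_int hlog_int measurableSet_Ioi fun r hr ↦ ?_
        have hr' : 0 < r := hr
        have := mul_le_mul_of_nonneg_left (log_one_add_tangent_le hκ hρ hr')
          (mul_nonneg hr'.le (hu r hr))
        calc (log (1 + κ * ρ) + c) * (r * u r) - c * ρ * u r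
            = r * u r * (log (1 + κ * ρ) + c * (1 - ρ / r)) := by field_simp; ring
          _ ≤ r * u r * log (1 + κ * r) := this

lemma setIntegral_lt_setIntegral_of_lt {X : Type*} [MeasurableSpace X] {μ : Measure X}
    {s : Set X} {f g : X → ℝ} (hs : MeasurableSet s) (hμs : μ s ≠ 0)
    (hf : IntegrableOn f s μ) (hg : IntegrableOn g s μ) (hlt : ∀ x ∈ s, f x < g x) :
    ∫ x in s, f x ∂μ < ∫ x in s, g x ∂μ := by
  rw [← sub_pos, ← integral_sub hg hf]
  refine (setIntegral_pos_iff_support_of_nonneg_ae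
    ((ae_restrict_iff' hs).2 (Eventually.of_forall fun x hx ↦ (sub_pos.2 (hlt x hx)).le))
    (hg.sub hf)).2 ?_
  have hsupp : (Function.support fun x ↦ g x - f x) ∩ s = s :=
    inter_eq_right.2 fun x hx ↦ (sub_pos.2 (hlt x hx)).ne'
  rwa [hsupp, pos_iff_ne_zero]

lemma etaFun_lt {κ t : ℝ} (hκ : 0 < κ) (ht : 0 < t) :
    etaFun κ t < κ * (∫ r in Ioi 0, r ^ 2 * (sinh (κ * r) * exp (-r ^ 2 / (2 * t)))) -
      ∫ r in Ioi 0, r * (sinh (κ * r) * exp (-r ^ 2 / (2 * t))) * log (1 + κ * r) := by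
  have hlog_int := integrableOn_mul_sinh_mul_gauss_mul_log_one_add ht hκ.le
  have hη_int := integrableOn_mul_sinh_mul_gauss_mul (C := κ) ht hκ.le
    (h := fun r ↦ log (sinh (κ * r) / (κ * r))) (by fun_prop : Measurable _).aestronglyMeasurable
    fun r (hr : 0 < r) ↦ abs_log_sinh_div_le (by positivity)
  have hsq_int := integrableOn_pow_mul_sinh_mul_gauss ht 2 κ
  have hη : etaFun κ t =
      ∫ r in Ioi 0, r * (sinh (κ * r) * exp (-r ^ 2 / (2 * t))) * log (sinh (κ * r) / (κ * r)) := by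
    rw [etaFun]
    congr 1; ext r; ring
  rw [hη, ← integral_const_mul, ← integral_sub (hsq_int.const_mul κ) hlog_int]
  refine setIntegral_lt_setIntegral_of_lt measurableSet_Ioi (by simp) hη_int
    ((hsq_int.const_mul κ).sub hlog_int) fun r (hr : 0 < r) ↦ ?_
  have hw : 0 < r * (sinh (κ * r) * exp (-r ^ 2 / (2 * t))) := by
    have := sinh_pos_iff.2 (mul_pos hκ hr)
    positivity
  calc r * (sinh (κ * r) * exp (-r ^ 2 / (2 * t))) * log (sinh (κ * r) / (κ * r))
      < r * (sinh (κ * r) * exp (-r ^ 2 / (2 * t))) * (κ * r - log (1 + κ * r)) :=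
        mul_lt_mul_of_pos_left (log_sinh_div_lt (mul_pos hκ hr)) hw
    _ = _ := by ring

/-- For `κ > 0` and `t > 0`,
`η(t) < κ²t² + κ t^{3/2}(κ²t+1)e^{κ²t/2} α(t)
       - √(π/2) κ t^{3/2} e^{κ²t/2} log(1 + √(π/2) κ²t α(t)⁻¹)`. -/
theorem eta_upper_bound (κ : ℝ) (hκ : 0 < κ) (t : ℝ) (ht : 0 < t) :
    etaFun κ t <
      κ ^ 2 * t ^ 2 + κ * t ^ ((3 : ℝ) / 2) * (κ ^ 2 * t + 1) * Real.exp (κ ^ 2 * t / 2) *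
          alphaFun κ t -
        Real.sqrt (π / 2) * κ * t ^ ((3 : ℝ) / 2) * Real.exp (κ ^ 2 * t / 2) *
          Real.log (1 + Real.sqrt (π / 2) * κ ^ 2 * t * (alphaFun κ t)⁻¹) := by
  have hα := alphaFun_pos hκ ht
  set ρ := √(π / 2) * κ * t / alphaFun κ t
  have hρα : ρ * alphaFun κ t = √(π / 2) * κ * t := div_mul_cancel₀ _ hα.ne'
  have hjensen := integral_mul_log_one_add_ge (ρ := ρ) hκ.le (by positivity)
    (fun r (hr : 0 < r) ↦ by have := sinh_pos_iff.2 (mul_pos hκ hr); positivity)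
    (by simpa using integrableOn_pow_mul_sinh_mul_gauss ht 0 κ)
    (by simpa using integrableOn_pow_mul_sinh_mul_gauss ht 1 κ)
    (integrableOn_mul_sinh_mul_gauss_mul_log_one_add ht hκ.le)
    (by rw [integral_sinh_mul_gauss ht, integral_mul_sinh_mul_gauss ht]
        linear_combination √t * exp (κ ^ 2 * t / 2) * hρα)
  rw [integral_mul_sinh_mul_gauss ht] at hjensen
  have hκρ : κ * ρ = √(π / 2) * κ ^ 2 * t * (alphaFun κ t)⁻¹ := by ring
  have h32 : t ^ ((3 : ℝ) / 2) = t * √t := by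
    rw [show (3 : ℝ) / 2 = 1 + 1 / 2 by norm_num, rpow_add ht, rpow_one, sqrt_eq_rpow]
  calc etaFun κ t
      < κ * (∫ r in Ioi 0, r ^ 2 * (sinh (κ * r) * exp (-r ^ 2 / (2 * t)))) -
          ∫ r in Ioi 0, r * (sinh (κ * r) * exp (-r ^ 2 / (2 * t))) * log (1 + κ * r) :=
        etaFun_lt hκ ht
    _ ≤ κ * (∫ r in Ioi 0, r ^ 2 * (sinh (κ * r) * exp (-r ^ 2 / (2 * t)))) -
          √(π / 2) * κ * t * √t * exp (κ ^ 2 * t / 2) * log (1 + κ * ρ) :=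
        sub_le_sub_left hjensen _
    _ = _ := by rw [integral_sq_mul_sinh_mul_gauss ht, hκρ, h32]; ring
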